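/- arXiv:2205.11210 — 3 statements merged into one kernel-verified Lean document; each statement's English description precedes it below -/
import Mathlib

section
/- Let G_k=(V,E,k) be a strongly connected labeled simple digraph. Then the vector of tree constants K_k ∈ ℝ^V is componentwise positive, it satisfies A_k K_k = 0, and the kernel of the Laplacian matrix A_k equals the linear span of K_k. -/
open Matrix BigOperators Finset

variable {V : Type*}

/-- Directed reachability in the digraph with edge set `F`. -/
def dReach (F : Finset (V × V)) : V → V → Prop :=
  Relation.ReflTransGen fun a b => (a, b) ∈ F

/-- Reachability in the underlying undirected graph of the digraph with edge set `F`. -/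
def uReach (F : Finset (V × V)) : V → V → Prop :=
  Relation.ReflTransGen fun a b => (a, b) ∈ F ∨ (b, a) ∈ F

/-- A digraph is strongly connected if every vertex reaches every other vertex. -/
def StronglyConnected (F : Finset (V × V)) : Prop :=
  ∀ i j : V, dReach F i j

/-- A simple digraph has no self-loops. -/
def NoSelfLoops (F : Finset (V × V)) : Prop :=
  ∀ e ∈ F, e.1 ≠ e.2

/-- The edge set `F` contains a directed cycle. -/
def HasDirectedCycle (F : Finset (V × V)) : Prop :=
  ∃ v : V, Relation.TransGen (fun a b => (a, b) ∈ F) v v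

/-- The Laplacian matrix `A_k` of the labeled digraph `(V, F, k)`:
`(A_k)_{i,j} = k_{j→i}` if `(j→i) ∈ F`, `(A_k)_{i,i} = -∑_{(i→j)∈F} k_{i→j}`, and `0` otherwise. -/
noncomputable def dLaplacian [Fintype V] [DecidableEq V]
    (F : Finset (V × V)) (k : V × V → ℝ) : Matrix V V ℝ :=
  Matrix.of fun i j =>
    if i = j then -(∑ e ∈ F.filter (fun e => e.1 = i), k e)
    else if (j, i) ∈ F then k (j, i) else 0

/-- `T` is a directed spanning tree of the strongly connected digraph `E`, rooted at `i`
and directed towards the root: no directed cycle, and every vertex except `i`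
is the source of exactly one edge. -/
def IsSpanningTreeTo [DecidableEq V] (E : Finset (V × V)) (i : V)
    (T : Finset (V × V)) : Prop :=
  T ⊆ E ∧ ¬ HasDirectedCycle T ∧
    ∀ j : V, j ≠ i → (T.filter (fun e => e.1 = j)).card = 1

open scoped Classical in
/-- The tree constant `(K_k)_i = ∑_{T ∈ T_i} ∏_{(j→j')∈T} k_{j→j'}`. -/
noncomputable def treeConst [Fintype V] [DecidableEq V]
    (E : Finset (V × V)) (k : V × V → ℝ) (i : V) : ℝ :=
  ∑ T ∈ E.powerset.filter (fun T => IsSpanningTreeTo E i T), ∏ e ∈ T, k e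

/-- The incidence matrix of the digraph with edge set `F`: in the column of edge `(j→j')`,
entry `-1` in row `j`, entry `+1` in row `j'`, and `0` elsewhere. -/
noncomputable def incidence [DecidableEq V] (F : Finset (V × V)) :
    Matrix V {e : V × V // e ∈ F} ℝ :=
  Matrix.of fun i e =>
    (if (e : V × V).2 = i then (1 : ℝ) else 0) - (if (e : V × V).1 = i then (1 : ℝ) else 0)


/-! Every spanning tree has positive weight and, by strong connectivity, each vertex is the
root of one, so `K_k > 0`. For the `i`-th row of `A_k K_k = 0`, both `∑_{j→i} k_{j→i} (K_k)_j`
and `(∑_{i→j} k_{i→j}) (K_k)_i` are the weighted count of the spanning subgraphs in which every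
vertex has out-degree one and the unique cycle passes through `i`: such a subgraph is obtained
exactly once by adding an edge into `i` to a tree rooted at its tail, and exactly once by adding
an edge out of `i` to a tree rooted at `i`. Finally, if `A_k x = 0` and `c = max_v x_v / (K_k)_v`,
then `c K_k - x` is a nonnegative kernel vector with a zero, and a zero of such a vector
propagates to all in-neighbours, hence everywhere. -/

open Relation

section Reachability

variable {F G : Finset (V × V)}

theorem dReach.mono (hFG : F ⊆ G) {a b : V} (h : dReach F a b) : dReach G a b :=
  ReflTransGen.mono (fun _ _ hab => hFG hab) _ _ h

theorem dReach_erase_of_dReach [DecidableEq V] {a b v : V} (h : dReach F v a) :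
    dReach (F.erase (a, b)) v a := by
  induction h using ReflTransGen.head_induction_on with
  | refl => exact ReflTransGen.refl
  | @head u w huw _ ih =>
    by_cases hu : u = a
    · rw [hu]; exact ReflTransGen.refl
    · exact ReflTransGen.head (mem_erase.mpr ⟨fun h => hu (congrArg Prod.fst h), huw⟩) ih

/-- Vertices on a cycle are closed under the (unique) successor, so a root reachable from
everywhere would lie on the cycle. -/
theorem not_hasDirectedCycle_of_dReach {r : V}
    (hfun : ∀ v w w', (v, w) ∈ F → (v, w') ∈ F → w = w')
    (hr : ∀ w, (r, w) ∉ F) (hreach : ∀ v, dReach F v r) : ¬HasDirectedCycle F := by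
  rintro ⟨v, hv⟩
  have hclosed : ∀ x y, TransGen (fun a b => (a, b) ∈ F) x x → (x, y) ∈ F →
      TransGen (fun a b => (a, b) ∈ F) y y := by
    intro x y hx hxy
    obtain ⟨y', hxy', hy'x⟩ := TransGen.head'_iff.mp hx
    rw [hfun x y' y hxy' hxy] at hy'x
    exact TransGen.tail' hy'x hxy
  have hcycle : ∀ x, dReach F v x → TransGen (fun a b => (a, b) ∈ F) x x := by
    intro x hx
    induction hx with
    | refl => exact hv
    | tail _ hbc ih => exact hclosed _ _ ih hbc
  obtain ⟨w, hrw, -⟩ := TransGen.head'_iff.mp (hcycle r (hreach v))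
  exact hr w hrw

theorem wellFounded_of_not_hasDirectedCycle [Finite V] (h : ¬HasDirectedCycle F) :
    WellFounded (fun a b : V => (b, a) ∈ F) := by
  have : IsTrans V (TransGen (Function.swap fun a b : V => (a, b) ∈ F)) :=
    ⟨fun _ _ _ => TransGen.trans⟩
  have : Std.Irrefl (TransGen (Function.swap fun a b : V => (a, b) ∈ F)) :=
    ⟨fun v hv => h ⟨v, transGen_swap.mp hv⟩⟩
  exact Subrelation.wf (r := TransGen (Function.swap fun a b : V => (a, b) ∈ F))
    (fun h => TransGen.single h) (Finite.wellFounded_of_trans_of_irrefl _)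

variable [DecidableEq V] {v w w' : V}

theorem snd_eq_of_card_filter_fst_eq_one (h : (F.filter (fun e => e.1 = v)).card = 1)
    (hw : (v, w) ∈ F) (hw' : (v, w') ∈ F) : w = w' :=
  congrArg Prod.snd (card_le_one.mp h.le _ (mem_filter.mpr ⟨hw, rfl⟩) _ (mem_filter.mpr ⟨hw', rfl⟩))

theorem exists_mem_of_card_filter_fst_eq_one (h : (F.filter (fun e => e.1 = v)).card = 1) :
    ∃ w, (v, w) ∈ F := by
  obtain ⟨e, he⟩ := card_pos.mp (h ▸ one_pos)
  obtain ⟨heF, rfl⟩ := mem_filter.mp he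
  exact ⟨e.2, heF⟩

theorem mem_of_insert_eq_of_ne {e₁ e₂ : V × V} {T₁ T₂ : Finset (V × V)}
    (h : insert e₁ T₁ = insert e₂ T₂) (hne : e₁ ≠ e₂) : e₁ ∈ T₂ :=
  (mem_insert.mp (h ▸ mem_insert_self e₁ T₁)).resolve_left hne

end Reachability

section SpanningTrees

variable [DecidableEq V] {E T : Finset (V × V)} {i : V}

namespace IsSpanningTreeTo

theorem dReach_root [Finite V] (hT : IsSpanningTreeTo E i T) (v : V) : dReach T v i := by
  induction v using (wellFounded_of_not_hasDirectedCycle hT.2.1).induction with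
  | _ v ih =>
    by_cases hv : v = i
    · rw [hv]; exact ReflTransGen.refl
    · obtain ⟨w, hw⟩ := exists_mem_of_card_filter_fst_eq_one (hT.2.2 v hv)
      exact ReflTransGen.head hw (ih w hw)

theorem fst_ne_root [Finite V] (hT : IsSpanningTreeTo E i T) {e : V × V} (he : e ∈ T) :
    e.1 ≠ i := by
  intro h
  subst h
  exact hT.2.1 ⟨e.1, TransGen.head' he (hT.dReach_root e.2)⟩

theorem card_filter_insert [Finite V] {e : V × V} (hT : IsSpanningTreeTo E e.1 T) (v : V) :
    ((insert e T).filter (fun x => x.1 = v)).card = 1 := by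
  rw [filter_insert]
  split_ifs with hv
  · rw [filter_eq_empty_iff.mpr fun x hx => hv ▸ hT.fst_ne_root hx]
    rfl
  · exact hT.2.2 v (Ne.symm hv)

end IsSpanningTreeTo

end SpanningTrees

section Existence

variable {E : Finset (V × V)}

def dReachIn (E : Finset (V × V)) : ℕ → V → V → Prop
  | 0, a, b => a = b
  | n + 1, a, b => ∃ c, (a, c) ∈ E ∧ dReachIn E n c b

theorem exists_dReachIn_of_dReach {a b : V} (h : dReach E a b) : ∃ n, dReachIn E n a b := by
  induction h using ReflTransGen.head_induction_on with
  | refl => exact ⟨0, rfl⟩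
  | head hac _ ih =>
    obtain ⟨n, hn⟩ := ih
    exact ⟨n + 1, _, hac, hn⟩

/-- Let each `j ≠ i` point to an out-neighbour strictly closer to `i`; the distance to `i`
decreases along these edges, so they form no cycle. -/
theorem exists_isSpanningTreeTo [Fintype V] [DecidableEq V] (hsc : StronglyConnected E) (i : V) :
    ∃ T, IsSpanningTreeTo E i T := by
  classical
  have hex : ∀ j, ∃ n, dReachIn E n j i := fun j => exists_dReachIn_of_dReach (hsc j i)
  let d : V → ℕ := fun j => Nat.find (hex j)
  have hcloser : ∀ j, j ≠ i → ∃ c, (j, c) ∈ E ∧ d c < d j := by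
    intro j hj
    have hd := Nat.find_spec (hex j)
    cases hdj : d j with
    | zero => exact absurd (hdj ▸ hd : dReachIn E 0 j i) hj
    | succ m =>
      obtain ⟨c, hjc, hc⟩ := (hdj ▸ hd : dReachIn E (m + 1) j i)
      exact ⟨c, hjc, (Nat.find_le hc).trans_lt m.lt_succ_self⟩
  choose! p hpE hpd using hcloser
  set T := (univ.erase i).image fun j => (j, p j)
  have hmemT : ∀ {a b : V}, (a, b) ∈ T ↔ a ≠ i ∧ b = p a := by
    intro a b
    simp only [T, mem_image, mem_erase, mem_univ, and_true, Prod.mk.injEq]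
    constructor
    · rintro ⟨j, hj, rfl, rfl⟩
      exact ⟨hj, rfl⟩
    · rintro ⟨ha, rfl⟩
      exact ⟨a, ha, rfl, rfl⟩
  refine ⟨T, fun ⟨a, b⟩ hab => ?_, ?_, fun j hj => card_eq_one.mpr ⟨(j, p j), ?_⟩⟩
  · obtain ⟨ha, rfl⟩ := hmemT.mp hab
    exact hpE a ha
  · have hdecr : ∀ a b, TransGen (fun a b => (a, b) ∈ T) a b → d b < d a := by
      intro a b hab
      induction hab with
      | single h =>
        obtain ⟨ha, rfl⟩ := hmemT.mp h
        exact hpd _ ha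
      | tail _ h ih =>
        obtain ⟨ha, rfl⟩ := hmemT.mp h
        exact (hpd _ ha).trans ih
    rintro ⟨v, hv⟩
    exact lt_irrefl _ (hdecr v v hv)
  · ext ⟨a, b⟩
    simp only [mem_filter, mem_singleton, hmemT, Prod.mk.injEq]
    constructor
    · rintro ⟨⟨-, rfl⟩, rfl⟩
      exact ⟨rfl, rfl⟩
    · rintro ⟨rfl, rfl⟩
      exact ⟨⟨hj, rfl⟩, rfl⟩

theorem treeConst_pos [Fintype V] [DecidableEq V] {k : V × V → ℝ} (hk : ∀ e ∈ E, 0 < k e)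
    (hsc : StronglyConnected E) (i : V) : 0 < treeConst E k i := by
  classical
  obtain ⟨T, hT⟩ := exists_isSpanningTreeTo hsc i
  refine sum_pos (fun T' hT' => prod_pos fun e he => ?_)
    ⟨T, mem_filter.mpr ⟨mem_powerset.mpr hT.1, hT⟩⟩
  exact hk e (mem_powerset.mp (mem_filter.mp hT').1 he)

end Existence

section RowIdentity

variable [Fintype V] [DecidableEq V] {E F T : Finset (V × V)} {i : V}

open scoped Classical in
/-- Spanning subgraphs with all out-degrees one in which every vertex reaches `i`: these have
a single cycle, and it passes through `i`. -/
noncomputable def unicyclesThrough (E : Finset (V × V)) (i : V) : Finset (Finset (V × V)) :=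
  E.powerset.filter fun F => (∀ v, (F.filter (fun e => e.1 = v)).card = 1) ∧ ∀ v, dReach F v i

theorem mem_unicyclesThrough : F ∈ unicyclesThrough E i ↔
    F ⊆ E ∧ (∀ v, (F.filter (fun e => e.1 = v)).card = 1) ∧ ∀ v, dReach F v i := by
  simp only [unicyclesThrough, mem_filter, mem_powerset]

theorem IsSpanningTreeTo.insert_mem_unicyclesThrough_of_fst {e : V × V}
    (hT : IsSpanningTreeTo E e.1 T) (he : e ∈ E) (hei : e.1 = i) :
    insert e T ∈ unicyclesThrough E i := by
  subst hei
  exact mem_unicyclesThrough.mpr ⟨insert_subset he hT.1, hT.card_filter_insert,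
    fun v => (hT.dReach_root v).mono (subset_insert _ _)⟩

theorem IsSpanningTreeTo.insert_mem_unicyclesThrough_of_snd {e : V × V}
    (hT : IsSpanningTreeTo E e.1 T) (he : e ∈ E) (hei : e.2 = i) :
    insert e T ∈ unicyclesThrough E i := by
  subst hei
  exact mem_unicyclesThrough.mpr ⟨insert_subset he hT.1, hT.card_filter_insert,
    fun v => ReflTransGen.tail ((hT.dReach_root v).mono (subset_insert _ _)) (mem_insert_self e T)⟩

theorem isSpanningTreeTo_erase_of_mem_unicyclesThrough (hF : F ∈ unicyclesThrough E i)
    {a b : V} (hab : (a, b) ∈ F) (hia : dReach F i a) : IsSpanningTreeTo E a (F.erase (a, b)) := by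
  obtain ⟨hFE, hdeg, hreach⟩ := mem_unicyclesThrough.mp hF
  refine ⟨(erase_subset _ _).trans hFE, ?_, fun v hv => ?_⟩
  · refine not_hasDirectedCycle_of_dReach (r := a)
      (fun v w w' hw hw' => snd_eq_of_card_filter_fst_eq_one (hdeg v)
        (mem_of_mem_erase hw) (mem_of_mem_erase hw'))
      (fun w hw => ?_) (fun v => dReach_erase_of_dReach ((hreach v).trans hia))
    obtain ⟨hne, hw⟩ := mem_erase.mp hw
    exact hne (by rw [snd_eq_of_card_filter_fst_eq_one (hdeg a) hw hab])
  · rw [filter_erase, erase_eq_of_notMem fun h => hv (mem_filter.mp h).2.symm]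
    exact hdeg v

theorem exists_fst_insert_eq_of_mem_unicyclesThrough (hF : F ∈ unicyclesThrough E i) :
    ∃ e ∈ E.filter (fun e => e.1 = i), ∃ T, IsSpanningTreeTo E e.1 T ∧ insert e T = F := by
  obtain ⟨hFE, hdeg, -⟩ := mem_unicyclesThrough.mp hF
  obtain ⟨b, hb⟩ := exists_mem_of_card_filter_fst_eq_one (hdeg i)
  exact ⟨(i, b), mem_filter.mpr ⟨hFE hb, rfl⟩, _,
    isSpanningTreeTo_erase_of_mem_unicyclesThrough hF hb ReflTransGen.refl, insert_erase hb⟩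

/-- The edge to remove is the one entering `i` along the cycle through `i`. -/
theorem exists_snd_insert_eq_of_mem_unicyclesThrough (hF : F ∈ unicyclesThrough E i) :
    ∃ e ∈ E.filter (fun e => e.2 = i), ∃ T, IsSpanningTreeTo E e.1 T ∧ insert e T = F := by
  obtain ⟨hFE, hdeg, hreach⟩ := mem_unicyclesThrough.mp hF
  obtain ⟨b, hb⟩ := exists_mem_of_card_filter_fst_eq_one (hdeg i)
  obtain ⟨j, hij, hji⟩ : ∃ j, dReach F i j ∧ (j, i) ∈ F := by
    rcases ReflTransGen.cases_tail (hreach b) with rfl | ⟨j, hbj, hji⟩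
    · exact ⟨_, ReflTransGen.refl, hb⟩
    · exact ⟨j, ReflTransGen.head hb hbj, hji⟩
  exact ⟨(j, i), mem_filter.mpr ⟨hFE hji, rfl⟩, _,
    isSpanningTreeTo_erase_of_mem_unicyclesThrough hF hji hij, insert_erase hji⟩

theorem IsSpanningTreeTo.eq_of_insert_eq_of_fst_eq {e₁ e₂ : V × V} {T₁ T₂ : Finset (V × V)}
    (hT₂ : IsSpanningTreeTo E e₂.1 T₂) (h : insert e₁ T₁ = insert e₂ T₂) (h1 : e₁.1 = e₂.1) :
    e₁ = e₂ := by
  by_contra hne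
  exact hT₂.fst_ne_root (mem_of_insert_eq_of_ne h hne) h1

/-- Walks in `T₁` from the common head `e₂.2` never use `e₂` (that would close a cycle in `T₁`),
so they are walks in `T₂`; followed by `e₁ ∈ T₂` they close a cycle in `T₂`. -/
theorem IsSpanningTreeTo.eq_of_insert_eq_of_snd_eq {e₁ e₂ : V × V} {T₁ T₂ : Finset (V × V)}
    (hT₁ : IsSpanningTreeTo E e₁.1 T₁) (hT₂ : IsSpanningTreeTo E e₂.1 T₂)
    (h : insert e₁ T₁ = insert e₂ T₂) (h2 : e₁.2 = e₂.2) : e₁ = e₂ := by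
  by_contra hne
  have he₁ : e₁ ∈ T₂ := mem_of_insert_eq_of_ne h hne
  have he₂ : e₂ ∈ T₁ := mem_of_insert_eq_of_ne h.symm (Ne.symm hne)
  have hwalk : ∀ x, dReach T₁ e₂.2 x → dReach T₂ e₂.2 x := by
    intro x hx
    induction hx with
    | refl => exact ReflTransGen.refl
    | @tail y z hy hyz ih =>
      have hy' : y ≠ e₂.1 := by
        rintro rfl
        exact hT₁.2.1 ⟨e₂.2, TransGen.tail' hy he₂⟩
      have hyz' : (y, z) ∈ insert e₂ T₂ := h ▸ mem_insert_of_mem hyz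
      exact ReflTransGen.tail ih
        ((mem_insert.mp hyz').resolve_left fun he => hy' (congrArg Prod.fst he))
  have hcycle := TransGen.tail' (hwalk _ (hT₁.dReach_root e₂.2)) he₁
  rw [h2] at hcycle
  exact hT₂.2.1 ⟨e₂.2, hcycle⟩

/-- Since `e` leaves the root of `T`, the tree `T` is recovered from `insert e T` by erasing `e`. -/
theorem sum_mul_treeConst_eq_sum_prod {k : V × V → ℝ} {S : Finset (V × V)}
    {C : Finset (Finset (V × V))}
    (hmaps : ∀ e ∈ S, ∀ T, IsSpanningTreeTo E e.1 T → insert e T ∈ C)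
    (hinj : ∀ e₁ ∈ S, ∀ e₂ ∈ S, ∀ T₁ T₂, IsSpanningTreeTo E e₁.1 T₁ →
      IsSpanningTreeTo E e₂.1 T₂ → insert e₁ T₁ = insert e₂ T₂ → e₁ = e₂)
    (hsurj : ∀ F ∈ C, ∃ e ∈ S, ∃ T, IsSpanningTreeTo E e.1 T ∧ insert e T = F) :
    ∑ e ∈ S, k e * treeConst E k e.1 = ∑ F ∈ C, ∏ x ∈ F, k x := by
  classical
  simp only [treeConst, mul_sum]
  rw [sum_sigma']
  refine sum_bij (fun p _ => insert p.1 p.2) (fun p hp => ?_) (fun ⟨e, T₁⟩ hp ⟨e', T₂⟩ hq h => ?_)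
    (fun F hF => ?_) (fun p hp => ?_)
  · simp only [mem_sigma, mem_filter] at hp
    exact hmaps _ hp.1 _ hp.2.2
  · simp only [mem_sigma, mem_filter] at hp hq h
    obtain rfl : e = e' := hinj _ hp.1 _ hq.1 _ _ hp.2.2 hq.2.2 h
    rw [← erase_insert (fun h => hp.2.2.fst_ne_root h rfl), h,
      erase_insert (fun h => hq.2.2.fst_ne_root h rfl)]
  · obtain ⟨e, he, T, hT, rfl⟩ := hsurj F hF
    exact ⟨⟨e, T⟩, mem_sigma.mpr ⟨he, mem_filter.mpr ⟨mem_powerset.mpr hT.1, hT⟩⟩, rfl⟩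
  · exact (prod_insert fun h => (mem_filter.mp (mem_sigma.mp hp).2).2.fst_ne_root h rfl).symm

end RowIdentity

section Laplacian

variable [Fintype V] [DecidableEq V] {E : Finset (V × V)} {k : V × V → ℝ}

theorem sum_filter_fst_mul_treeConst (i : V) :
    ∑ e ∈ E.filter (fun e => e.1 = i), k e * treeConst E k e.1 =
      ∑ F ∈ unicyclesThrough E i, ∏ x ∈ F, k x := by
  refine sum_mul_treeConst_eq_sum_prod
    (fun e he T hT => hT.insert_mem_unicyclesThrough_of_fst (mem_filter.mp he).1
      (mem_filter.mp he).2)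
    (fun e₁ he₁ e₂ he₂ T₁ T₂ _ hT₂ h => hT₂.eq_of_insert_eq_of_fst_eq h ?_)
    fun F hF => exists_fst_insert_eq_of_mem_unicyclesThrough hF
  rw [(mem_filter.mp he₁).2, (mem_filter.mp he₂).2]

theorem sum_filter_snd_mul_treeConst (i : V) :
    ∑ e ∈ E.filter (fun e => e.2 = i), k e * treeConst E k e.1 =
      ∑ F ∈ unicyclesThrough E i, ∏ x ∈ F, k x := by
  refine sum_mul_treeConst_eq_sum_prod
    (fun e he T hT => hT.insert_mem_unicyclesThrough_of_snd (mem_filter.mp he).1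
      (mem_filter.mp he).2)
    (fun e₁ he₁ e₂ he₂ T₁ T₂ hT₁ hT₂ h => hT₁.eq_of_insert_eq_of_snd_eq hT₂ h ?_)
    fun F hF => exists_snd_insert_eq_of_mem_unicyclesThrough hF
  rw [(mem_filter.mp he₁).2, (mem_filter.mp he₂).2]

theorem dLaplacian_eq_sub_diagonal (hloop : NoSelfLoops E) :
    dLaplacian E k = Matrix.of (fun i j => if (j, i) ∈ E then k (j, i) else 0) -
      Matrix.diagonal fun i => ∑ e ∈ E.filter (fun e => e.1 = i), k e := by
  ext a b
  by_cases hab : a = b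
  · have hnot : (a, a) ∉ E := fun h => hloop _ h rfl
    subst hab
    simp [dLaplacian, hnot]
  · simp [dLaplacian, hab, Matrix.diagonal_apply_ne]

theorem dLaplacian_mulVec_apply (hloop : NoSelfLoops E) (z : V → ℝ) (i : V) :
    (dLaplacian E k *ᵥ z) i =
      ∑ e ∈ E.filter (fun e => e.2 = i), k e * z e.1 -
        (∑ e ∈ E.filter (fun e => e.1 = i), k e) * z i := by
  have hin : ∑ e ∈ E.filter (fun e => e.2 = i), k e * z e.1 =
      ∑ j, if (j, i) ∈ E then k (j, i) * z j else 0 := by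
    rw [← sum_filter]
    refine sum_nbij' Prod.fst (fun j => (j, i)) ?_ ?_ ?_ ?_ ?_ <;> aesop
  rw [dLaplacian_eq_sub_diagonal hloop, Matrix.sub_mulVec, Pi.sub_apply, Matrix.mulVec_diagonal,
    hin]
  simp [Matrix.mulVec, dotProduct]

theorem dLaplacian_mulVec_treeConst (hloop : NoSelfLoops E) :
    dLaplacian E k *ᵥ treeConst E k = 0 := by
  funext i
  rw [dLaplacian_mulVec_apply hloop, Pi.zero_apply, sub_eq_zero, sum_filter_snd_mul_treeConst,
    ← sum_filter_fst_mul_treeConst, sum_mul]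
  exact sum_congr rfl fun e he => by rw [(mem_filter.mp he).2]

/-- Row `b` reads `∑_{a→b} k_{a→b} z_a = 0`, a sum of nonnegative terms, so a zero of `z`
spreads to its in-neighbours. -/
theorem eq_zero_of_dLaplacian_mulVec_eq_zero_of_nonneg (hloop : NoSelfLoops E)
    (hk : ∀ e ∈ E, 0 < k e) (hsc : StronglyConnected E) {z : V → ℝ}
    (hz : dLaplacian E k *ᵥ z = 0) (hnonneg : 0 ≤ z) {v₀ : V} (hv₀ : z v₀ = 0) : z = 0 := by
  have hstep : ∀ a b, (a, b) ∈ E → z b = 0 → z a = 0 := by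
    intro a b hab hb
    have hrow := congrFun hz b
    rw [dLaplacian_mulVec_apply hloop, hb, mul_zero, sub_zero, Pi.zero_apply] at hrow
    have hterm := (sum_eq_zero_iff_of_nonneg fun e he =>
      mul_nonneg (hk e (mem_filter.mp he).1).le (hnonneg e.1)).mp hrow (a, b)
        (mem_filter.mpr ⟨hab, rfl⟩)
    exact (mul_eq_zero.mp hterm).resolve_left (hk _ hab).ne'
  funext v
  induction hsc v v₀ using ReflTransGen.head_induction_on with
  | refl => exact hv₀
  | head hab _ ih => exact hstep _ _ hab ih

/-- With `c = max x / K`, the vector `c • K - x` is nonnegative and has a zero. -/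
theorem exists_smul_eq_of_dLaplacian_mulVec_eq_zero (hloop : NoSelfLoops E)
    (hk : ∀ e ∈ E, 0 < k e) (hsc : StronglyConnected E) {K x : V → ℝ}
    (hK : dLaplacian E k *ᵥ K = 0) (hKpos : ∀ v, 0 < K v) (hx : dLaplacian E k *ᵥ x = 0) :
    ∃ c : ℝ, c • K = x := by
  cases isEmpty_or_nonempty V
  · exact ⟨0, Subsingleton.elim _ _⟩
  obtain ⟨v₀, hv₀⟩ := Finite.exists_max fun v => x v / K v
  set c := x v₀ / K v₀
  refine ⟨c, sub_eq_zero.mp (eq_zero_of_dLaplacian_mulVec_eq_zero_of_nonneg hloop hk hsc ?_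
    (fun v => ?_) (v₀ := v₀) ?_)⟩
  · rw [Matrix.mulVec_sub, Matrix.mulVec_smul, hK, hx, smul_zero, sub_zero]
  · exact sub_nonneg.mpr ((div_le_iff₀ (hKpos v)).mp (hv₀ v))
  · simp only [Pi.sub_apply, Pi.smul_apply, smul_eq_mul, c, div_mul_cancel₀ _ (hKpos v₀).ne',
      sub_self]

end Laplacian

/-- For a strongly connected labeled simple digraph, the vector of tree constants is
componentwise positive, satisfies `A_k K_k = 0`, and spans the kernel of `A_k`. -/
theorem tree_constants_span_kernel
    {V : Type*} [Fintype V] [DecidableEq V]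
    (E : Finset (V × V)) (hloop : NoSelfLoops E)
    (k : V × V → ℝ) (hk : ∀ e ∈ E, 0 < k e)
    (hsc : StronglyConnected E) :
    (∀ i : V, 0 < treeConst E k i) ∧
    (dLaplacian E k).mulVec (treeConst E k) = 0 ∧
    LinearMap.ker (dLaplacian E k).mulVecLin = Submodule.span ℝ {treeConst E k} := by
  have hpos := treeConst_pos hk hsc
  have hker := dLaplacian_mulVec_treeConst (k := k) hloop
  refine ⟨hpos, hker, le_antisymm (fun x hx => ?_) ?_⟩
  · obtain ⟨c, hc⟩ :=
      exists_smul_eq_of_dLaplacian_mulVec_eq_zero hloop hk hsc hker hpos (LinearMap.mem_ker.mp hx)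
    exact Submodule.mem_span_singleton.mpr ⟨c, hc⟩
  · exact (Submodule.span_singleton_le_iff_mem _ _).mpr hker
end

section
/- (Lemma B.1) Let G_k=(V,E,k) be a connected labeled simple digraph with exactly one absorbing strongly connected component (a strongly connected component from which no edge of G leaves). Then the column space of the Laplacian matrix A_k equals the column space of the incidence matrix I_E: im(A_k) = im(I_E) as subspaces of ℝ^V. -/
/-!
Every edge `j → j'` contributes `k_{j→j'}` times its incidence column to column `j` of `A_k`,
so `A_k = I_E W` for a weight matrix `W`, and `im A_k ⊆ im I_E`. The columns of `I_E` sum to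
zero, so `rank I_E ≤ |V| - 1`. Conversely, if `xᵀ A_k = 0` then at every vertex `x` is a
positively weighted average of its out-neighbours, so a maximum of `x` propagates along directed
edges. Every vertex reaches the unique absorbing component, hence the maximum and the minimum of
`x` are both attained there and `x` is constant: `rank A_k ≥ |V| - 1`.
-/

open Matrix BigOperators Finset

variable {V : Type*}

/-- The Laplacian matrix `A_k` of the labeled digraph `(V, F, k)`:
`(A_k)_{i,j} = k_{j→i}` if `(j→i) ∈ F`, `(A_k)_{i,i} = -∑_{(i→j)∈F} k_{i→j}`, and `0` otherwise. -/
noncomputable def digraphLaplacian [Fintype V] [DecidableEq V]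
    (F : Finset (V × V)) (k : V × V → ℝ) : Matrix V V ℝ :=
  Matrix.of fun i j =>
    if i = j then -(∑ e ∈ F.filter (fun e => e.1 = i), k e)
    else if (j, i) ∈ F then k (j, i) else 0

/-- Vertex `v` lies in an absorbing strongly connected component of the digraph `E`
(no edge of `E` leaves the strongly connected component of `v`). -/
def InAbsorbingSCC {V : Type*} (E : Finset (V × V)) (v : V) : Prop :=
  ∀ w : V, dReach E v w → dReach E w v

namespace Matrix

variable {m n K : Type*} [Fintype m] [Fintype n] [Field K]

theorem rank_add_finrank_ker_mulVecLin_transpose (M : Matrix m n K) :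
    M.rank + Module.finrank K (LinearMap.ker Mᵀ.mulVecLin) = Fintype.card m := by
  rw [← rank_transpose, rank, LinearMap.finrank_range_add_finrank_ker,
    Module.finrank_fintype_fun_eq_card]

end Matrix

theorem exists_dReach_inAbsorbingSCC [Fintype V] (E : Finset (V × V)) (w : V) :
    ∃ u, dReach E w u ∧ InAbsorbingSCC E u := by
  classical
  have hself : ∀ a, a ∈ univ.filter (dReach E a) := fun a => mem_filter.2 ⟨mem_univ a, .refl⟩
  -- a vertex reachable from `w` with the fewest reachable vertices is absorbing
  obtain ⟨u, hwu, hmin⟩ := (univ.filter (dReach E w)).exists_min_image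
    (fun u => #(univ.filter (dReach E u))) ⟨w, hself w⟩
  have hwu : dReach E w u := (mem_filter.1 hwu).2
  refine ⟨u, hwu, fun z huz => ?_⟩
  by_contra hzu
  have hsub : univ.filter (dReach E z) ⊂ univ.filter (dReach E u) :=
    (ssubset_iff_of_subset fun a ha => mem_filter.2 ⟨mem_univ a, huz.trans (mem_filter.1 ha).2⟩).2
      ⟨u, hself u, fun h => hzu (mem_filter.1 h).2⟩
  exact (card_lt_card hsub).not_ge (hmin z (mem_filter.2 ⟨mem_univ z, hwu.trans huz⟩))

theorem dReach_of_inAbsorbingSCC [Fintype V] {E : Finset (V × V)}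
    (habs_uniq : ∀ u v : V, InAbsorbingSCC E u → InAbsorbingSCC E v → dReach E u v)
    {v : V} (hv : InAbsorbingSCC E v) (w : V) : dReach E w v := by
  obtain ⟨u, hwu, hu⟩ := exists_dReach_inAbsorbingSCC E w
  exact hwu.trans (habs_uniq u v hu hv)

section Harmonic

variable [DecidableEq V] {E : Finset (V × V)} {k : V × V → ℝ} {x : V → ℝ}

def IsHarmonic (E : Finset (V × V)) (k : V × V → ℝ) (x : V → ℝ) : Prop :=
  ∀ j, ∑ e ∈ E with e.1 = j, k e * (x e.2 - x j) = 0

theorem IsHarmonic.neg (hx : IsHarmonic E k x) : IsHarmonic E k (-x) := fun j => by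
  rw [← neg_eq_zero, ← sum_neg_distrib, ← hx j]
  simp only [Pi.neg_apply, neg_sub_neg, ← mul_neg, neg_sub]

theorem IsHarmonic.apply_eq_of_mem_of_forall_le (hx : IsHarmonic E k x) (hk : ∀ e ∈ E, 0 < k e)
    {j c : V} (hmax : ∀ i, x i ≤ x j) (hc : (j, c) ∈ E) : x c = x j := by
  have hterm : ∀ e ∈ E.filter (·.1 = j), k e * (x e.2 - x j) ≤ 0 := fun e he =>
    mul_nonpos_of_nonneg_of_nonpos (hk e (mem_filter.1 he).1).le (sub_nonpos.2 (hmax _))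
  have hjc := (sum_eq_zero_iff_of_nonpos hterm).1 (hx j) (j, c) (by simp [hc])
  simpa [sub_eq_zero, (hk _ hc).ne'] using hjc

theorem IsHarmonic.forall_le_of_dReach (hx : IsHarmonic E k x) (hk : ∀ e ∈ E, 0 < k e)
    {j w : V} (hmax : ∀ i, x i ≤ x j) (hjw : dReach E j w) : ∀ i, x i ≤ x w := by
  induction hjw with
  | refl => exact hmax
  | tail _ hbc ih => rwa [hx.apply_eq_of_mem_of_forall_le hk ih hbc]

theorem IsHarmonic.apply_eq_of_forall_dReach [Fintype V] (hx : IsHarmonic E k x)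
    (hk : ∀ e ∈ E, 0 < k e) {v : V} (hroot : ∀ w, dReach E w v) (i : V) : x i = x v := by
  have : Nonempty V := ⟨v⟩
  obtain ⟨jmax, -, hjmax⟩ := univ.exists_max_image x univ_nonempty
  obtain ⟨jmin, -, hjmin⟩ := univ.exists_max_image (-x) univ_nonempty
  have hle := hx.forall_le_of_dReach hk (fun i => hjmax i (mem_univ i)) (hroot jmax) i
  have hge := hx.neg.forall_le_of_dReach hk (fun i => hjmin i (mem_univ i)) (hroot jmin) i
  simp only [Pi.neg_apply, neg_le_neg_iff] at hge
  exact le_antisymm hle hge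

end Harmonic

section Laplacian

variable [Fintype V] [DecidableEq V] (E : Finset (V × V)) (k : V × V → ℝ)

noncomputable def sourceWeight : Matrix {e // e ∈ E} V ℝ :=
  of fun e j => if (e : V × V).1 = j then k e else 0

theorem digraphLaplacian_eq_incidence_mul_sourceWeight (hloop : NoSelfLoops E) :
    digraphLaplacian E k = incidence E * sourceWeight E k := by
  ext i j
  simp only [digraphLaplacian, incidence, sourceWeight, mul_apply, of_apply]
  rw [sum_coe_sort E (fun e => ((if e.2 = i then 1 else 0) - if e.1 = i then 1 else 0) *
    if e.1 = j then k e else 0)]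
  simp only [sub_mul, sum_sub_distrib, ite_mul, one_mul, zero_mul, ← ite_and]
  by_cases hij : i = j
  · subst hij
    have hout : ∀ e ∈ E, ¬(e.2 = i ∧ e.1 = i) := fun e he h => hloop e he (h.2.trans h.1.symm)
    simp [sum_ite_of_false hout, sum_filter]
  · have hout : ∀ e ∈ E, ¬(e.1 = i ∧ e.1 = j) := fun e _ h => hij (h.1.symm.trans h.2)
    have hedge : ∀ e : V × V, (e.2 = i ∧ e.1 = j) ↔ (j, i) = e := fun e => by
      rw [Prod.ext_iff]; tauto
    simp only [hedge, sum_ite_eq, sum_ite_of_false hout, if_neg hij, sum_const_zero, sub_zero]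

theorem incidence_transpose_mulVec (x : V → ℝ) (e : {e // e ∈ E}) :
    ((incidence E)ᵀ *ᵥ x) e = x (e : V × V).2 - x (e : V × V).1 := by
  simp [incidence, mulVec, dotProduct, sub_mul, sum_sub_distrib, ite_mul]

theorem digraphLaplacian_transpose_mulVec (hloop : NoSelfLoops E) (x : V → ℝ) (j : V) :
    ((digraphLaplacian E k)ᵀ *ᵥ x) j = ∑ e ∈ E with e.1 = j, k e * (x e.2 - x j) := by
  rw [digraphLaplacian_eq_incidence_mul_sourceWeight E k hloop, transpose_mul, ← mulVec_mulVec]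
  set y := (incidence E)ᵀ *ᵥ x with hy
  simp only [mulVec, dotProduct, transpose_apply, sourceWeight, of_apply, ite_mul, zero_mul]
  simp only [hy, incidence_transpose_mulVec]
  rw [sum_coe_sort E (fun e => if e.1 = j then k e * (x e.2 - x e.1) else 0), sum_filter]
  refine sum_congr rfl fun e _ => ?_
  split_ifs with he <;> simp [he]

theorem range_digraphLaplacian_le_range_incidence (hloop : NoSelfLoops E) :
    LinearMap.range (digraphLaplacian E k).mulVecLin ≤ LinearMap.range (incidence E).mulVecLin := by
  rw [digraphLaplacian_eq_incidence_mul_sourceWeight E k hloop, mulVecLin_mul]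
  exact LinearMap.range_comp_le_range _ _

theorem ker_digraphLaplacian_transpose_le (hloop : NoSelfLoops E) (hk : ∀ e ∈ E, 0 < k e)
    {v : V} (hroot : ∀ w, dReach E w v) :
    LinearMap.ker (digraphLaplacian E k)ᵀ.mulVecLin ≤ Submodule.span ℝ {fun _ => 1} := by
  intro x hx
  have hharm : IsHarmonic E k x := fun j => by
    rw [← digraphLaplacian_transpose_mulVec E k hloop]
    exact congrFun (LinearMap.mem_ker.1 hx) j
  refine Submodule.mem_span_singleton.2 ⟨x v, funext fun i => ?_⟩
  simp [hharm.apply_eq_of_forall_dReach hk hroot i]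

theorem card_sub_one_le_rank_digraphLaplacian (hloop : NoSelfLoops E) (hk : ∀ e ∈ E, 0 < k e)
    {v : V} (hroot : ∀ w, dReach E w v) :
    Fintype.card V - 1 ≤ (digraphLaplacian E k).rank := by
  have hker : Module.finrank ℝ (LinearMap.ker (digraphLaplacian E k)ᵀ.mulVecLin) ≤ 1 :=
    (Submodule.finrank_mono (ker_digraphLaplacian_transpose_le E k hloop hk hroot)).trans
      ((finrank_span_le_card _).trans (by simp))
  have := (digraphLaplacian E k).rank_add_finrank_ker_mulVecLin_transpose
  omega

theorem rank_incidence_le [Nonempty V] : (incidence E).rank ≤ Fintype.card V - 1 := by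
  have hone : (fun _ => 1 : V → ℝ) ∈ LinearMap.ker (incidence E)ᵀ.mulVecLin :=
    LinearMap.mem_ker.2 (funext fun e => (incidence_transpose_mulVec E _ e).trans (sub_self 1))
  have hpos : 0 < Module.finrank ℝ (LinearMap.ker (incidence E)ᵀ.mulVecLin) :=
    Module.finrank_pos_iff_exists_ne_zero.2 ⟨⟨_, hone⟩, fun h => by
      simpa using congrFun (congrArg Subtype.val h) (Classical.arbitrary V)⟩
  have := (incidence E).rank_add_finrank_ker_mulVecLin_transpose
  omega

end Laplacian

theorem range_laplacian_eq_range_incidence_general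
    {V : Type*} [Fintype V] [DecidableEq V]
    (E : Finset (V × V)) (hloop : NoSelfLoops E)
    (k : V × V → ℝ) (hk : ∀ e ∈ E, 0 < k e)
    (habs_ex : ∃ v : V, InAbsorbingSCC E v)
    (habs_uniq : ∀ u v : V, InAbsorbingSCC E u → InAbsorbingSCC E v → dReach E u v) :
    LinearMap.range (digraphLaplacian E k).mulVecLin =
      LinearMap.range (incidence E).mulVecLin := by
  obtain ⟨v, hv⟩ := habs_ex
  have : Nonempty V := ⟨v⟩
  exact Submodule.eq_of_le_of_finrank_le (range_digraphLaplacian_le_range_incidence E k hloop) <|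
    (rank_incidence_le E).trans <|
    card_sub_one_le_rank_digraphLaplacian E k hloop hk (dReach_of_inAbsorbingSCC habs_uniq hv)

/-- (Lemma B.1) Let `G_k = (V,E,k)` be a connected labeled simple digraph with exactly one
absorbing strongly connected component. Then `im(A_k) = im(I_E)`. -/
theorem range_laplacian_eq_range_incidence
    {V : Type*} [Fintype V] [DecidableEq V]
    (E : Finset (V × V)) (hloop : NoSelfLoops E)
    (k : V × V → ℝ) (hk : ∀ e ∈ E, 0 < k e)
    (hconn : ∀ i j : V, uReach E i j)
    (habs_ex : ∃ v : V, InAbsorbingSCC E v)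
    (habs_uniq : ∀ u v : V, InAbsorbingSCC E u → InAbsorbingSCC E v → dReach E u v) :
    LinearMap.range (digraphLaplacian E k).mulVecLin =
      LinearMap.range (incidence E).mulVecLin :=
  range_laplacian_eq_range_incidence_general E hloop k hk habs_ex habs_uniq
end

section
/- (Fact A.2) Let G_k=(V,E,k) be a strongly connected labeled simple digraph. Then A_k diag(K_k) = ∑_C λ_{k,C} A_C, where the sum runs over all directed cycles C contained in G, λ_{k,C} = ∑_{S ∈ G_C} ∏_{(j→j')∈S} k_{j→j'} with G_C the set of subgraphs of G that contain the cycle C, contain no other cycle, and in which every vertex is the source of exactly one edge, and A_C is the Laplacian matrix of the cycle C with all edge labels equal to 1. -/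
open Matrix BigOperators Finset

variable {V : Type*}

/-- `C` is a directed cycle: it is nonempty, every vertex is the source of at most one edge
and of as many edges as it is the target of, and any two edges lie on a common closed walk
(so `C` is a single cycle, not a disjoint union of cycles). -/
def IsDirectedCycle {V : Type*} [DecidableEq V] (C : Finset (V × V)) : Prop :=
  C.Nonempty ∧
    (∀ v : V, (C.filter (fun e => e.1 = v)).card ≤ 1 ∧
      (C.filter (fun e => e.1 = v)).card = (C.filter (fun e => e.2 = v)).card) ∧
    ∀ e ∈ C, ∀ e' ∈ C, Relation.ReflTransGen (fun a b => (a, b) ∈ C) e.1 e'.1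

/-- `S` belongs to `G_C`: a subgraph of `E` that contains the cycle `C`, contains no other
cycle, and in which every vertex is the source of exactly one edge. -/
def MemCycleSubgraphs {V : Type*} [DecidableEq V] (E C S : Finset (V × V)) : Prop :=
  S ⊆ E ∧ C ⊆ S ∧ (∀ v : V, (S.filter (fun e => e.1 = v)).card = 1) ∧
    ∀ C' : Finset (V × V), IsDirectedCycle C' → C' ⊆ S → C' = C

open scoped Classical in
/-- The cycle constant `λ_{k,C} = ∑_{S ∈ G_C} ∏_{(j→j')∈S} k_{j→j'}`. -/
noncomputable def cycleConst {V : Type*} [Fintype V] [DecidableEq V]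
    (E C : Finset (V × V)) (k : V × V → ℝ) : ℝ :=
  ∑ S ∈ E.powerset.filter (fun S => MemCycleSubgraphs E C S), ∏ e ∈ S, k e

/-!
Both sides are images of edge weights under the linear map `w ↦ L w` with `(L w)ᵢⱼ = w (j, i)`
off the diagonal and `-∑ᵥ w (i, v)` on it, so it suffices to show
`k (a, b) * K a = ∑_{C ∋ (a, b)} λ C` for every edge `a → b`.
Adding `a → b` to a spanning tree rooted at `a` gives a subgraph in which every vertex has
out-degree one, i.e. the graph of a map `f`. Its directed cycles are the edge sets of the
periodic orbits of `f`, and as the tree is acyclic every periodic orbit passes through `a`, so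
there is exactly one, and it contains `a → b`. Conversely, deleting `a → b` from a subgraph in
`G_C` with `(a, b) ∈ C` leaves a spanning tree rooted at `a`.
-/

namespace Function

variable {α : Type*} {f : α → α} {x y : α}

theorem exists_iterate_mem_periodicPts [Finite α] (f : α → α) (x : α) :
    ∃ n, f^[n] x ∈ periodicPts f := by
  obtain ⟨m, n, hne, h⟩ := Finite.exists_ne_map_eq_of_infinite (fun n : ℕ => f^[n] x)
  wlog hmn : m < n generalizing m n
  · exact this n m hne.symm h.symm (by omega)
  refine ⟨m, mk_mem_periodicPts (n := n - m) (by omega) ?_⟩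
  rw [IsPeriodicPt, IsFixedPt, ← iterate_add_apply, Nat.sub_add_cancel hmn.le, h]

theorem mem_periodicPts_of_mem_periodicOrbit (hy : y ∈ periodicOrbit f x) :
    y ∈ periodicPts f := by
  by_cases hx : x ∈ periodicPts f
  · obtain ⟨n, rfl⟩ := (mem_periodicOrbit_iff hx).mp hy
    obtain ⟨p, hp, hxp⟩ := mem_periodicPts.mp hx
    exact mk_mem_periodicPts hp (hxp.apply_iterate n)
  · simp [periodicOrbit_eq_nil_of_not_periodic_pt hx] at hy

theorem periodicOrbit_eq_of_mem (hy : y ∈ periodicOrbit f x) :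
    periodicOrbit f y = periodicOrbit f x := by
  have hx : x ∈ periodicPts f := by
    by_contra hx
    simp [periodicOrbit_eq_nil_of_not_periodic_pt hx] at hy
  obtain ⟨n, rfl⟩ := (mem_periodicOrbit_iff hx).mp hy
  exact periodicOrbit_apply_iterate_eq hx n

theorem apply_mem_periodicOrbit (hy : y ∈ periodicOrbit f x) : f y ∈ periodicOrbit f x := by
  have hy' := mem_periodicPts_of_mem_periodicOrbit hy
  rw [← periodicOrbit_eq_of_mem hy]
  exact iterate_mem_periodicOrbit hy' 1

end Function

open Function Relation

section FunctionalGraph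

variable [Fintype V] [DecidableEq V] {f : V → V} {x y : V} {S T : Finset (V × V)}

def funGraph (f : V → V) : Finset (V × V) :=
  univ.filter fun e => e.2 = f e.1

@[simp]
lemma mem_funGraph {e : V × V} : e ∈ funGraph f ↔ e.2 = f e.1 := by
  simp [funGraph]

lemma exists_eq_funGraph_of_card_filter_fst_eq_one (h : ∀ v, #(S.filter (·.1 = v)) = 1) :
    ∃ f : V → V, S = funGraph f := by
  choose e he using fun v => card_eq_one.mp (h v)
  have hmem v : e v ∈ S ∧ (e v).1 = v := mem_filter.mp (he v ▸ mem_singleton_self _)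
  refine ⟨fun v => (e v).2, ext fun d => ⟨fun hd => ?_, fun hd => ?_⟩⟩
  · have : d ∈ S.filter (·.1 = d.1) := mem_filter.mpr ⟨hd, rfl⟩
    rw [he, mem_singleton] at this
    exact mem_funGraph.mpr (congrArg Prod.snd this)
  · rw [show d = e d.1 from Prod.ext (hmem d.1).2.symm (mem_funGraph.mp hd)]
    exact (hmem d.1).1

lemma reflTransGen_iff_exists_iterate (hT : T ⊆ funGraph f) :
    ReflTransGen (fun a b => (a, b) ∈ T) x y ↔
      ∃ n, f^[n] x = y ∧ ∀ m < n, (f^[m] x, f^[m + 1] x) ∈ T := by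
  constructor
  · intro h
    induction h with
    | refl => exact ⟨0, rfl, by simp⟩
    | @tail b c _ hbc ih =>
      obtain ⟨n, rfl, hsteps⟩ := ih
      refine ⟨n + 1, ?_, fun m hm => ?_⟩
      · rw [iterate_succ_apply', ← mem_funGraph.mp (hT hbc)]
      · rcases Nat.lt_succ_iff_lt_or_eq.mp hm with hm | rfl
        · exact hsteps m hm
        · rwa [iterate_succ_apply', ← mem_funGraph.mp (hT hbc)]
  · rintro ⟨n, rfl, hsteps⟩
    induction n with
    | zero => exact .refl
    | succ n ih => exact .tail (ih fun m hm => hsteps m (by omega)) (hsteps n n.lt_succ_self)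

lemma transGen_iff_exists_iterate (hT : T ⊆ funGraph f) :
    TransGen (fun a b => (a, b) ∈ T) x y ↔
      ∃ n, f^[n + 1] x = y ∧ ∀ m ≤ n, (f^[m] x, f^[m + 1] x) ∈ T := by
  rw [TransGen.tail'_iff]
  constructor
  · rintro ⟨b, hxb, hb⟩
    obtain ⟨n, rfl, hsteps⟩ := (reflTransGen_iff_exists_iterate hT).mp hxb
    refine ⟨n, ?_, fun m hm => ?_⟩
    · rw [iterate_succ_apply', ← mem_funGraph.mp (hT hb)]
    · rcases hm.lt_or_eq with hm | rfl
      · exact hsteps m hm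
      · rwa [iterate_succ_apply', ← mem_funGraph.mp (hT hb)]
  · rintro ⟨n, rfl, hsteps⟩
    exact ⟨_, (reflTransGen_iff_exists_iterate hT).mpr ⟨n, rfl, fun m hm => hsteps m hm.le⟩,
      hsteps n le_rfl⟩

noncomputable def orbitEdges (f : V → V) (x : V) : Finset (V × V) :=
  (funGraph f).filter (·.1 ∈ periodicOrbit f x)

lemma mem_orbitEdges {e : V × V} :
    e ∈ orbitEdges f x ↔ e.1 ∈ periodicOrbit f x ∧ e.2 = f e.1 := by
  simp [orbitEdges, and_comm]

lemma orbitEdges_subset_funGraph : orbitEdges f x ⊆ funGraph f :=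
  filter_subset _ _

lemma iterate_mem_orbitEdges (hx : x ∈ periodicPts f) (m : ℕ) :
    (f^[m] x, f^[m + 1] x) ∈ orbitEdges f x :=
  mem_orbitEdges.mpr ⟨iterate_mem_periodicOrbit hx m, iterate_succ_apply' f m x⟩

lemma orbitEdges_eq_of_mem (hy : y ∈ periodicOrbit f x) : orbitEdges f y = orbitEdges f x := by
  simp only [orbitEdges, periodicOrbit_eq_of_mem hy]

end FunctionalGraph

lemma HasDirectedCycle.mono {S T : Finset (V × V)} (h : HasDirectedCycle S) (hST : S ⊆ T) :
    HasDirectedCycle T :=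
  let ⟨v, hv⟩ := h
  ⟨v, TransGen.mono (fun _ _ hab => hST hab) _ _ hv⟩

lemma IsDirectedCycle.hasDirectedCycle [DecidableEq V] {C : Finset (V × V)}
    (hC : IsDirectedCycle C) : HasDirectedCycle C := by
  obtain ⟨⟨e, he⟩, hdeg, hconn⟩ := hC
  have hin : 0 < #(C.filter (·.2 = e.2)) := card_pos.mpr ⟨e, mem_filter.mpr ⟨he, rfl⟩⟩
  obtain ⟨e', he'⟩ := card_pos.mp ((hdeg e.2).2 ▸ hin)
  obtain ⟨he'C, he'1⟩ := mem_filter.mp he'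
  exact ⟨e.1, .head' he (he'1 ▸ hconn e' he'C e he)⟩

lemma card_filter_fst_insert [DecidableEq V] {T : Finset (V × V)} {a b : V} (hab : (a, b) ∉ T)
    (v : V) :
    #((insert (a, b) T).filter (·.1 = v)) = #(T.filter (·.1 = v)) + if a = v then 1 else 0 := by
  rw [filter_insert]
  split_ifs with h
  · exact card_insert_of_notMem fun h' => hab (mem_filter.mp h').1
  · rfl

section Cycles

variable [Fintype V] [DecidableEq V] {f : V → V} {x y : V} {C S T : Finset (V × V)}

lemma hasDirectedCycle_of_orbitEdges_subset (hx : x ∈ periodicPts f) (h : orbitEdges f x ⊆ T) :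
    HasDirectedCycle T := by
  refine HasDirectedCycle.mono ⟨x, ?_⟩ h
  have hp := minimalPeriod_pos_of_mem_periodicPts hx
  refine (transGen_iff_exists_iterate orbitEdges_subset_funGraph).mpr
    ⟨minimalPeriod f x - 1, ?_, fun m _ => iterate_mem_orbitEdges hx m⟩
  rw [Nat.sub_add_cancel hp, iterate_minimalPeriod]

lemma HasDirectedCycle.exists_orbitEdges_subset (h : HasDirectedCycle T) (hT : T ⊆ funGraph f) :
    ∃ x ∈ periodicPts f, orbitEdges f x ⊆ T := by
  obtain ⟨x, hx⟩ := h
  obtain ⟨n, hxn, hsteps⟩ := (transGen_iff_exists_iterate hT).mp hx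
  have hper : IsPeriodicPt f (n + 1) x := hxn
  refine ⟨x, mk_mem_periodicPts n.succ_pos hper, fun e he => ?_⟩
  obtain ⟨hex, he2⟩ := mem_orbitEdges.mp he
  obtain ⟨m, hm⟩ := (mem_periodicOrbit_iff (mk_mem_periodicPts n.succ_pos hper)).mp hex
  have hstep := hsteps (m % (n + 1)) (Nat.le_of_lt_succ (Nat.mod_lt _ n.succ_pos))
  rwa [iterate_succ_apply', hper.iterate_mod_apply, hm, ← he2] at hstep

lemma hasDirectedCycle_of_forall_exists_mem (v₀ : V) (h : ∀ v, ∃ w, (v, w) ∈ T) :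
    HasDirectedCycle T := by
  choose g hg using h
  obtain ⟨n, hn⟩ := exists_iterate_mem_periodicPts g v₀
  refine hasDirectedCycle_of_orbitEdges_subset hn fun e he => ?_
  rw [show e = (e.1, g e.1) from Prod.ext rfl (mem_orbitEdges.mp he).2]
  exact hg e.1

lemma card_filter_fst_orbitEdges (v : V) :
    #((orbitEdges f x).filter (·.1 = v)) = if v ∈ periodicOrbit f x then 1 else 0 := by
  split_ifs with hv
  · refine card_eq_one.mpr ⟨(v, f v), ext fun e => ?_⟩
    simp only [mem_filter, mem_orbitEdges, mem_singleton]
    constructor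
    · rintro ⟨⟨-, he2⟩, rfl⟩
      exact Prod.ext rfl he2
    · rintro rfl
      exact ⟨⟨hv, rfl⟩, rfl⟩
  · refine card_eq_zero.mpr (filter_eq_empty_iff.mpr fun e he he1 => hv ?_)
    exact he1 ▸ (mem_orbitEdges.mp he).1

lemma card_filter_snd_orbitEdges (v : V) :
    #((orbitEdges f x).filter (·.2 = v)) = if v ∈ periodicOrbit f x then 1 else 0 := by
  split_ifs with hv
  · obtain ⟨u, hu, rfl⟩ :=
      (bijOn_periodicPts f).surjOn (mem_periodicPts_of_mem_periodicOrbit hv)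
    have hux : u ∈ periodicOrbit f x := by
      rw [← periodicOrbit_eq_of_mem hv, periodicOrbit_apply_eq hu]
      exact self_mem_periodicOrbit hu
    refine card_eq_one.mpr ⟨(u, f u), ext fun e => ?_⟩
    simp only [mem_filter, mem_orbitEdges, mem_singleton]
    constructor
    · rintro ⟨⟨he1, he2⟩, hfe⟩
      have := (bijOn_periodicPts f).injOn (mem_periodicPts_of_mem_periodicOrbit he1) hu
        (he2 ▸ hfe)
      exact Prod.ext this hfe
    · rintro rfl
      exact ⟨⟨hux, rfl⟩, rfl⟩
  · refine card_eq_zero.mpr (filter_eq_empty_iff.mpr fun e he he2 => hv ?_)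
    obtain ⟨he1, he2'⟩ := mem_orbitEdges.mp he
    exact he2 ▸ he2' ▸ apply_mem_periodicOrbit he1

lemma isDirectedCycle_orbitEdges (hx : x ∈ periodicPts f) : IsDirectedCycle (orbitEdges f x) := by
  refine ⟨⟨_, iterate_mem_orbitEdges hx 0⟩, fun v => ?_, fun e he e' he' => ?_⟩
  · rw [card_filter_fst_orbitEdges, card_filter_snd_orbitEdges]
    exact ⟨by split_ifs <;> simp, rfl⟩
  · have he1 := (mem_orbitEdges.mp he).1
    have he1' := (mem_orbitEdges.mp he').1
    rw [← orbitEdges_eq_of_mem he1]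
    rw [← periodicOrbit_eq_of_mem he1] at he1'
    obtain ⟨n, hn⟩ := (mem_periodicOrbit_iff (mem_periodicPts_of_mem_periodicOrbit he1)).mp he1'
    exact (reflTransGen_iff_exists_iterate orbitEdges_subset_funGraph).mpr
      ⟨n, hn, fun m _ => iterate_mem_orbitEdges (mem_periodicPts_of_mem_periodicOrbit he1) m⟩

lemma IsDirectedCycle.eq_orbitEdges (hC : IsDirectedCycle C) (hCf : C ⊆ funGraph f) :
    ∃ x ∈ periodicPts f, C = orbitEdges f x := by
  obtain ⟨x, hx, hxC⟩ := hC.hasDirectedCycle.exists_orbitEdges_subset hCf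
  refine ⟨x, hx, subset_antisymm (fun e he => ?_) hxC⟩
  have hx0 := hxC (iterate_mem_orbitEdges hx 0)
  obtain ⟨n, hn, -⟩ := (reflTransGen_iff_exists_iterate hCf).mp (hC.2.2 _ hx0 e he)
  exact mem_orbitEdges.mpr ⟨hn ▸ iterate_mem_periodicOrbit hx n, mem_funGraph.mp (hCf he)⟩

end Cycles

section SpanningTrees

variable [Fintype V] [DecidableEq V] {E C S T : Finset (V × V)} {a b : V}

lemma IsSpanningTreeTo.root_notMem (hT : IsSpanningTreeTo E a T) (w : V) : (a, w) ∉ T := by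
  intro haw
  refine hT.2.1 (hasDirectedCycle_of_forall_exists_mem a fun v => ?_)
  by_cases hv : v = a
  · exact ⟨w, hv ▸ haw⟩
  · obtain ⟨e, he⟩ := card_pos.mp (hT.2.2 v hv ▸ Nat.one_pos)
    obtain ⟨heT, rfl⟩ := mem_filter.mp he
    exact ⟨e.2, heT⟩

lemma IsSpanningTreeTo.exists_memCycleSubgraphs_insert (hT : IsSpanningTreeTo E a T)
    (hab : (a, b) ∈ E) :
    ∃ C, IsDirectedCycle C ∧ (a, b) ∈ C ∧ MemCycleSubgraphs E C (insert (a, b) T) := by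
  have hout v : #((insert (a, b) T).filter (·.1 = v)) = 1 := by
    rw [card_filter_fst_insert (hT.root_notMem b)]
    by_cases hv : v = a
    · subst hv
      have : T.filter (·.1 = v) = ∅ :=
        filter_eq_empty_iff.mpr fun e he he1 => hT.root_notMem e.2 (by rwa [← he1])
      simp [this]
    · simp [hT.2.2 v hv, Ne.symm hv]
  obtain ⟨f, hf⟩ := exists_eq_funGraph_of_card_filter_fst_eq_one hout
  have hfa : f a = b := (mem_funGraph.mp (hf ▸ mem_insert_self (a, b) T)).symm
  -- a periodic orbit avoiding `a` would be a cycle of `T`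
  have hthrough : ∀ y ∈ periodicPts f, a ∈ periodicOrbit f y := by
    intro y hy
    by_contra hay
    refine hT.2.1 (hasDirectedCycle_of_orbitEdges_subset hy fun e he => ?_)
    have heS : e ∈ insert (a, b) T := hf ▸ orbitEdges_subset_funGraph he
    refine (mem_insert.mp heS).resolve_left fun hea => hay ?_
    subst hea
    exact (mem_orbitEdges.mp he).1
  obtain ⟨n, hn⟩ := exists_iterate_mem_periodicPts f a
  have ha := mem_periodicPts_of_mem_periodicOrbit (hthrough _ hn)
  refine ⟨orbitEdges f a, isDirectedCycle_orbitEdges ha,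
    mem_orbitEdges.mpr ⟨self_mem_periodicOrbit ha, hfa.symm⟩,
    insert_subset hab hT.1, hf ▸ orbitEdges_subset_funGraph, hout, fun C' hC' hC'S => ?_⟩
  obtain ⟨y, hy, rfl⟩ := hC'.eq_orbitEdges (hf ▸ hC'S)
  exact (orbitEdges_eq_of_mem (hthrough y hy)).symm

lemma MemCycleSubgraphs.isSpanningTreeTo_erase (hS : MemCycleSubgraphs E C S)
    (hab : (a, b) ∈ C) : IsSpanningTreeTo E a (S.erase (a, b)) := by
  obtain ⟨hSE, hCS, hout, hunique⟩ := hS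
  obtain ⟨f, rfl⟩ := exists_eq_funGraph_of_card_filter_fst_eq_one hout
  refine ⟨(erase_subset _ _).trans hSE, fun hcyc => ?_, fun v hv => ?_⟩
  · obtain ⟨x, hx, hxS⟩ := hcyc.exists_orbitEdges_subset (erase_subset _ _)
    have hxC := hunique _ (isDirectedCycle_orbitEdges hx) (hxS.trans (erase_subset _ _))
    exact notMem_erase (a, b) _ (hxS (hxC ▸ hab))
  · rw [filter_erase, erase_eq_of_notMem fun h => hv (mem_filter.mp h).2.symm]
    exact hout v

end SpanningTrees

section Laplacian

variable [Fintype V] [DecidableEq V]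

def weightLaplacian : (V × V → ℝ) →ₗ[ℝ] Matrix V V ℝ where
  toFun w := of fun i j => if i = j then -∑ v, w (i, v) else w (j, i)
  map_add' w w' := by
    ext i j
    by_cases h : i = j <;> simp [h, sum_add_distrib, add_comm]
  map_smul' c w := by
    ext i j
    by_cases h : i = j <;> simp [h, mul_sum]

lemma weightLaplacian_apply (w : V × V → ℝ) (i j : V) :
    weightLaplacian w i j = if i = j then -∑ v, w (i, v) else w (j, i) := by
  simp [weightLaplacian]

lemma digraphLaplacian_eq_weightLaplacian (F : Finset (V × V)) (k : V × V → ℝ) :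
    digraphLaplacian F k = weightLaplacian fun e => if e ∈ F then k e else 0 := by
  ext i j
  rw [weightLaplacian_apply, digraphLaplacian, of_apply]
  by_cases hij : i = j
  · rw [if_pos hij, if_pos hij, ← Fintype.sum_extend_by_zero, Fintype.sum_prod_type]
    simp [ite_and, and_comm (b := _ = i)]
  · rw [if_neg hij, if_neg hij]

lemma weightLaplacian_mul_diagonal (w : V × V → ℝ) (d : V → ℝ) :
    weightLaplacian w * diagonal d = weightLaplacian fun e => w e * d e.1 := by
  ext i j
  rw [mul_diagonal, weightLaplacian_apply, weightLaplacian_apply]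
  split_ifs with h
  · simp [h, sum_mul]
  · rfl

end Laplacian

section TreeConstants

open scoped Classical

variable [Fintype V] [DecidableEq V] {E : Finset (V × V)} {a b : V}

lemma mul_treeConst_eq_sum_cycleConst (k : V × V → ℝ) (hab : (a, b) ∈ E) :
    k (a, b) * treeConst E k a =
      ∑ C ∈ (E.powerset.filter fun C => IsDirectedCycle C).filter ((a, b) ∈ ·),
        cycleConst E C k := by
  have hdisj : ((E.powerset.filter fun C => IsDirectedCycle C).filter ((a, b) ∈ ·) :
      Set (Finset (V × V))).PairwiseDisjoint
        fun C => E.powerset.filter fun S => MemCycleSubgraphs E C S := by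
    intro C₁ _ C₂ hC₂ hne
    refine disjoint_left.mpr fun S hS₁ hS₂ => hne ?_
    simp only [coe_filter, mem_filter, mem_powerset, Set.mem_ofPred_eq] at hS₁ hS₂ hC₂
    exact (hS₁.2.2.2.2 C₂ hC₂.1.2 hS₂.2.2.1).symm
  simp only [cycleConst]
  rw [← sum_biUnion hdisj, treeConst, mul_sum]
  refine sum_nbij' (insert (a, b)) (erase · (a, b)) (fun T hT => ?_) (fun S hS => ?_)
    (fun T hT => ?_) (fun S hS => ?_) (fun T hT => ?_)
  · simp only [mem_filter, mem_powerset, mem_biUnion] at hT ⊢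
    obtain ⟨C, hC, habC, hS⟩ := hT.2.exists_memCycleSubgraphs_insert hab
    exact ⟨C, ⟨⟨hS.2.1.trans hS.1, hC⟩, habC⟩, hS.1, hS⟩
  · simp only [mem_filter, mem_powerset, mem_biUnion] at hS ⊢
    obtain ⟨C, ⟨-, habC⟩, -, hS⟩ := hS
    have hT := hS.isSpanningTreeTo_erase habC
    exact ⟨hT.1, hT⟩
  · exact erase_insert ((mem_filter.mp hT).2.root_notMem b)
  · simp only [mem_filter, mem_biUnion] at hS
    obtain ⟨C, ⟨-, habC⟩, -, hS⟩ := hS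
    exact insert_erase (hS.2.1 habC)
  · exact (prod_insert ((mem_filter.mp hT).2.root_notMem b)).symm

lemma indicator_mul_treeConst_eq_sum_cycleConst (k : V × V → ℝ) (e : V × V) :
    (if e ∈ E then k e else 0) * treeConst E k e.1 =
      ∑ C ∈ E.powerset.filter (fun C => IsDirectedCycle C),
        cycleConst E C k * if e ∈ C then 1 else 0 := by
  obtain ⟨a, b⟩ := e
  simp only [ite_mul, zero_mul, mul_ite, mul_one, mul_zero]
  rw [← sum_filter]
  split_ifs with hab
  · exact mul_treeConst_eq_sum_cycleConst k hab
  · refine (sum_eq_zero fun C hC => absurd ?_ hab).symm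
    simp only [mem_filter, mem_powerset] at hC
    exact hC.1.1 hC.2

end TreeConstants

open scoped Classical in
theorem laplacian_diag_treeConst_eq_sum_cycles_general
    {V : Type*} [Fintype V] [DecidableEq V]
    (E : Finset (V × V))
    (k : V × V → ℝ) :
    digraphLaplacian E k * Matrix.diagonal (treeConst E k) =
      ∑ C ∈ E.powerset.filter (fun C => IsDirectedCycle C),
        cycleConst E C k • digraphLaplacian C (fun _ => 1) := by
  simp only [digraphLaplacian_eq_weightLaplacian, weightLaplacian_mul_diagonal, ← map_smul,
    ← map_sum]
  congr 1
  ext e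
  simp only [Finset.sum_apply, Pi.smul_apply, smul_eq_mul]
  exact indicator_mul_treeConst_eq_sum_cycleConst k e

open scoped Classical in
/-- (Fact A.2) For a strongly connected labeled simple digraph,
`A_k diag(K_k) = ∑_C λ_{k,C} A_C`, the sum running over all directed cycles `C ⊆ E`,
where `A_C` is the Laplacian of the cycle `C` with all edge labels equal to `1`. -/
theorem laplacian_diag_treeConst_eq_sum_cycles
    {V : Type*} [Fintype V] [DecidableEq V]
    (E : Finset (V × V)) (hloop : NoSelfLoops E)
    (k : V × V → ℝ) (hk : ∀ e ∈ E, 0 < k e)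
    (hsc : StronglyConnected E) :
    digraphLaplacian E k * Matrix.diagonal (treeConst E k) =
      ∑ C ∈ E.powerset.filter (fun C => IsDirectedCycle C),
        cycleConst E C k • digraphLaplacian C (fun _ => 1) :=
  laplacian_diag_treeConst_eq_sum_cycles_general E k
end
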